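/- With respect to the degree-lexicographic ordering on monomials of k⟨x,y⟩ with x > y, the set {y², x²y + xyx + yx², xyxy − yxyx} is a Gröbner basis of the ideal (y², x²y + xyx + yx²); in particular every S-polynomial of these three elements reduces to zero modulo the set. -/

import Mathlib

/-!
The quotient of `ℚ⟨x,y⟩` by the ideal is realised on `ℚ[X]⁴`, with `x` and `y` acting by explicit
matrices satisfying both relations. Applied to `e₀`, the normal words `xᵃ, yxᵃ, xyxᵃ, yxyxᵃ`
give `e₀Xᵃ, e₁Xᵃ, e₂Xᵃ, e₃Xᵃ`, and an arbitrary word `u` gives a combination of the vectors of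
normal words that are deg-lex at most `u`. An element `p` of the ideal acts by zero; if its leading
monomial were a normal word, the coefficient of the corresponding vector in `p · e₀` would be the
leading coefficient of `p`, since all smaller monomials contribute nothing to it. So the leading
monomial is not normal, i.e. contains one of `yy, xxy, xyxy`.
-/

noncomputable section

/-- The free associative algebra `ℚ⟨x,y⟩`, as the monoid algebra of the free monoid on two
letters (`0 ↦ x`, `1 ↦ y`). -/
abbrev FA2 := MonoidAlgebra ℚ (FreeMonoid (Fin 2))

/-- Abbreviation: the word (monomial) corresponding to a list of letters. -/
def w (l : List (Fin 2)) : FreeMonoid (Fin 2) := FreeMonoid.ofList l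

/-- The letter ordering making `x = 0` *greater* than `y = 1`. -/
def letterLt (a b : Fin 2) : Prop := (b : ℕ) < (a : ℕ)

/-- Degree-lexicographic order on monomials: first compare lengths, then compare
lexicographically (with `x > y`). -/
def degLexLt (u v : FreeMonoid (Fin 2)) : Prop :=
  (FreeMonoid.toList u).length < (FreeMonoid.toList v).length ∨
    ((FreeMonoid.toList u).length = (FreeMonoid.toList v).length ∧
      List.Lex letterLt (FreeMonoid.toList u) (FreeMonoid.toList v))

/-- `m` is the leading monomial of `p`: it occurs in `p` and dominates every other
monomial of `p` in the deg-lex order. -/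
def IsLeadingMonomial (p : FA2) (m : FreeMonoid (Fin 2)) : Prop :=
  m ∈ p.coeff.support ∧ ∀ m' ∈ p.coeff.support, m' ≠ m → degLexLt m' m

/-- `g₁ = y²`. -/
def G1 : FA2 := MonoidAlgebra.single (w [1, 1]) 1

/-- `g₂ = x²y + xyx + yx²`. -/
def G2 : FA2 :=
  MonoidAlgebra.single (w [0, 0, 1]) 1 + MonoidAlgebra.single (w [0, 1, 0]) 1 +
    MonoidAlgebra.single (w [1, 0, 0]) 1

/-- `g₃ = xyxy − yxyx`. -/
def G3 : FA2 :=
  MonoidAlgebra.single (w [0, 1, 0, 1]) 1 - MonoidAlgebra.single (w [1, 0, 1, 0]) 1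

/-- The two-sided ideal generated by `g₁, g₂` (as a `ℚ`-submodule, which for a
`ℚ`-algebra is the same thing as the two-sided ideal). -/
def BVIdeal : Submodule ℚ FA2 :=
  Submodule.span ℚ {p | ∃ a b : FA2, p = a * G1 * b ∨ p = a * G2 * b}


open Polynomial Matrix Relation

namespace List

variable {α : Type*} {r : α → α → Prop} {u v t : List α}

def DegLex (r : α → α → Prop) (u v : List α) : Prop :=
  u.length < v.length ∨ (u.length = v.length ∧ Lex r u v)

theorem DegLex.trans [IsTrans α r] (h₁ : DegLex r u v) (h₂ : DegLex r v t) : DegLex r u t := by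
  rcases h₁ with h₁ | ⟨e₁, l₁⟩ <;> rcases h₂ with h₂ | ⟨e₂, l₂⟩
  · exact .inl (h₁.trans h₂)
  · exact .inl (e₂ ▸ h₁)
  · exact .inl (e₁ ▸ h₂)
  · exact .inr ⟨e₁.trans e₂, lex_trans (trans_of r) l₁ l₂⟩

instance [IsTrans α r] : IsTrans (List α) (DegLex r) := ⟨fun _ _ _ => DegLex.trans⟩

theorem DegLex.irrefl [Std.Irrefl r] (u : List α) : ¬ DegLex r u u := by
  rintro (h | ⟨-, h⟩)
  · exact h.false
  · exact lex_irrefl (irrefl_of r) u h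

theorem DegLex.cons (a : α) (h : DegLex r u v) : DegLex r (a :: u) (a :: v) := by
  rcases h with h | ⟨e, l⟩
  · exact .inl (Nat.succ_lt_succ h)
  · exact .inr ⟨congrArg Nat.succ e, .cons l⟩

theorem reflGen_degLex_cons (a : α) (h : ReflGen (DegLex r) u v) :
    ReflGen (DegLex r) (a :: u) (a :: v) := by
  cases h with
  | refl => exact .refl
  | single h => exact .single (h.cons a)

end List

open List

theorem FreeMonoid.exists_eq_mul_ofList_mul {α : Type*} {l : List α} {m : FreeMonoid α}
    (h : l <:+: m.toList) : ∃ u v, m = u * FreeMonoid.ofList l * v := by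
  obtain ⟨s, t, h⟩ := h
  exact ⟨.ofList s, .ofList t, by
    rw [← FreeMonoid.ofList_toList m, ← h, FreeMonoid.ofList_append, FreeMonoid.ofList_append]⟩

instance : IsTrans (Fin 2) letterLt := ⟨fun _ _ _ h₁ h₂ => h₂.trans h₁⟩

instance : Std.Irrefl letterLt := ⟨fun a => Nat.lt_irrefl a⟩

theorem letterLt_one_zero : letterLt 1 0 := Nat.zero_lt_one

namespace BVIdeal

theorem mul_G1_mul_mem (a b : FA2) : a * G1 * b ∈ BVIdeal :=
  Submodule.subset_span ⟨a, b, .inl rfl⟩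

theorem mul_G2_mul_mem (a b : FA2) : a * G2 * b ∈ BVIdeal :=
  Submodule.subset_span ⟨a, b, .inr rfl⟩

theorem G1_mem : G1 ∈ BVIdeal := by simpa using mul_G1_mul_mem 1 1

theorem G2_mem : G2 ∈ BVIdeal := by simpa using mul_G2_mul_mem 1 1

/-- `G3` is what the S-polynomial of the overlap `xxyy` of `xxy` and `yy` reduces to. -/
theorem G3_eq :
    G3 = G2 * .single (w [1]) 1 - .single (w [0, 0]) 1 * G1
      - .single (w [1]) 1 * G2 + G1 * .single (w [0, 0]) 1 := by
  simp only [G1, G2, G3, w, add_mul, mul_add, MonoidAlgebra.single_mul_single, one_mul,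
    ← FreeMonoid.ofList_append, List.cons_append, List.nil_append]
  abel

theorem G3_mem : G3 ∈ BVIdeal := by
  rw [G3_eq]
  refine add_mem (sub_mem (sub_mem ?_ ?_) ?_) ?_
  · simpa using mul_G2_mul_mem 1 (.single (w [1]) 1)
  · simpa using mul_G1_mul_mem (.single (w [0, 0]) 1) 1
  · simpa using mul_G2_mul_mem (.single (w [1]) 1) 1
  · simpa using mul_G1_mul_mem 1 (.single (w [0, 0]) 1)

/-- `xᵃ, yxᵃ, xyxᵃ, yxyxᵃ`: the words having none of `yy, xxy, xyxy` as a factor. -/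
def normalWord : Fin 4 → ℕ → List (Fin 2)
  | 0, a => replicate a 0
  | 1, a => 1 :: replicate a 0
  | 2, a => 0 :: 1 :: replicate a 0
  | 3, a => 1 :: 0 :: 1 :: replicate a 0

theorem normalWord_or_infix (u : List (Fin 2)) :
    (∃ j a, u = normalWord j a) ∨ [1, 1] <:+: u ∨ [0, 0, 1] <:+: u ∨ [0, 1, 0, 1] <:+: u := by
  induction u with
  | nil => exact .inl ⟨0, 0, rfl⟩
  | cons i u ih =>
    rcases ih with ⟨j, a, rfl⟩ | h | h | h
    · fin_cases i <;> fin_cases j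
      · exact .inl ⟨0, a + 1, rfl⟩
      · exact .inl ⟨2, a, rfl⟩
      · exact .inr (.inr (.inl ⟨[], _, rfl⟩))
      · exact .inr (.inr (.inr ⟨[], _, rfl⟩))
      · exact .inl ⟨1, a, rfl⟩
      · exact .inr (.inl ⟨[], _, rfl⟩)
      · exact .inl ⟨3, a, rfl⟩
      · exact .inr (.inl ⟨[], _, rfl⟩)
    · exact .inr (.inl (infix_cons h))
    · exact .inr (.inr (.inl (infix_cons h)))
    · exact .inr (.inr (.inr (infix_cons h)))

/-- Left multiplication by `x` and `y` on the quotient algebra, which is free over `ℚ[X]`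
(acting as right multiplication by `x`) on the words `normalWord j 0`; so `eⱼ Xᵃ` stands for
`normalWord j a`. -/
def mat : Fin 2 → Matrix (Fin 4) (Fin 4) ℚ[X] :=
  ![!![X, 0, 0, 0; 0, 0, -X ^ 2, 0; 0, 1, -X, 0; 0, 0, 0, X],
    !![0, 0, 0, 0; 1, 0, 0, 0; 0, 0, 0, 0; 0, 0, 1, 0]]

theorem mat_one_mul_mat_one : mat 1 * mat 1 = 0 := by
  ext i j : 1; fin_cases i <;> fin_cases j <;> simp [mat]

theorem mat_G2_relation :
    mat 0 * mat 0 * mat 1 + mat 0 * mat 1 * mat 0 + mat 1 * mat 0 * mat 0 = 0 := by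
  ext i j : 1; fin_cases i <;> fin_cases j <;> simp [mat] <;> ring

theorem mat_zero_mulVec_single_zero (p : ℚ[X]) : mat 0 *ᵥ Pi.single 0 p = Pi.single 0 (X * p) := by
  funext k; fin_cases k <;> simp [mat]

theorem mat_zero_mulVec_single_one (p : ℚ[X]) : mat 0 *ᵥ Pi.single 1 p = Pi.single 2 p := by
  funext k; fin_cases k <;> simp [mat]

theorem mat_zero_mulVec_single_two (p : ℚ[X]) :
    mat 0 *ᵥ Pi.single 2 p = -Pi.single 1 (X ^ 2 * p) - Pi.single 2 (X * p) := by
  funext k; fin_cases k <;> simp [mat]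

theorem mat_zero_mulVec_single_three (p : ℚ[X]) :
    mat 0 *ᵥ Pi.single 3 p = Pi.single 3 (X * p) := by
  funext k; fin_cases k <;> simp [mat]

theorem mat_one_mulVec_single_zero (p : ℚ[X]) : mat 1 *ᵥ Pi.single 0 p = Pi.single 1 p := by
  funext k; fin_cases k <;> simp [mat]

theorem mat_one_mulVec_single_one (p : ℚ[X]) : mat 1 *ᵥ Pi.single 1 p = 0 := by
  funext k; fin_cases k <;> simp [mat]

theorem mat_one_mulVec_single_two (p : ℚ[X]) : mat 1 *ᵥ Pi.single 2 p = Pi.single 3 p := by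
  funext k; fin_cases k <;> simp [mat]

theorem mat_one_mulVec_single_three (p : ℚ[X]) : mat 1 *ᵥ Pi.single 3 p = 0 := by
  funext k; fin_cases k <;> simp [mat]

def rep : FA2 →ₐ[ℚ] Matrix (Fin 4) (Fin 4) ℚ[X] :=
  MonoidAlgebra.lift ℚ _ _ (FreeMonoid.lift mat)

theorem rep_single (m : FreeMonoid (Fin 2)) (c : ℚ) :
    rep (.single m c) = c • (m.toList.map mat).prod := by
  rw [rep, MonoidAlgebra.lift_single, FreeMonoid.lift_apply]

theorem rep_single_w (l : List (Fin 2)) : rep (.single (w l) 1) = (l.map mat).prod := by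
  rw [rep_single, one_smul]; rfl

theorem rep_eq_zero_of_mem {p : FA2} (hp : p ∈ BVIdeal) : rep p = 0 := by
  have hG1 : rep G1 = 0 := by
    rw [G1, rep_single_w]; simpa using mat_one_mul_mat_one
  have hG2 : rep G2 = 0 := by
    simp only [G2, map_add, rep_single_w]; simpa [mul_assoc] using mat_G2_relation
  induction hp using Submodule.span_induction with
  | mem q hq =>
    obtain ⟨a, b, rfl | rfl⟩ := hq <;> simp [hG1, hG2]
  | zero => exact map_zero rep
  | add _ _ _ _ hu hv => rw [map_add, hu, hv, add_zero]
  | smul c _ _ hu => rw [map_smul, hu, smul_zero]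

def lowerSpan (m : List (Fin 2)) : Submodule ℚ (Fin 4 → ℚ[X]) :=
  Submodule.span ℚ
    {v | ∃ j a, ReflGen (DegLex letterLt) (normalWord j a) m ∧ Pi.single j (X ^ a) = v}

theorem single_mem_lowerSpan {j : Fin 4} {a : ℕ} {m : List (Fin 2)}
    (h : ReflGen (DegLex letterLt) (normalWord j a) m) : Pi.single j (X ^ a) ∈ lowerSpan m :=
  Submodule.subset_span ⟨j, a, h, rfl⟩

theorem lowerSpan_mono {m₁ m₂ : List (Fin 2)} (h : ReflGen (DegLex letterLt) m₁ m₂) :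
    lowerSpan m₁ ≤ lowerSpan m₂ :=
  Submodule.span_mono fun _ ⟨j, a, hja, hv⟩ => ⟨j, a, _root_.trans hja h, hv⟩

theorem mat_mulVec_single_mem_lowerSpan (i : Fin 2) (j : Fin 4) (a : ℕ) :
    mat i *ᵥ Pi.single j (X ^ a) ∈ lowerSpan (i :: normalWord j a) := by
  fin_cases i <;> fin_cases j <;> simp only [Fin.zero_eta, Fin.mk_one, Fin.reduceFinMk]
  · rw [mat_zero_mulVec_single_zero, ← pow_succ']
    exact single_mem_lowerSpan .refl
  · rw [mat_zero_mulVec_single_one]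
    exact single_mem_lowerSpan .refl
  · have h₁ : DegLex letterLt (normalWord 1 (a + 2)) (0 :: normalWord 2 a) :=
      .inr ⟨by simp [normalWord], .rel letterLt_one_zero⟩
    have h₂ : DegLex letterLt (normalWord 2 (a + 1)) (0 :: normalWord 2 a) :=
      .inr ⟨by simp [normalWord], .cons (.rel letterLt_one_zero)⟩
    rw [mat_zero_mulVec_single_two, ← pow_add, Nat.add_comm 2 a, ← pow_succ']
    exact sub_mem (neg_mem (single_mem_lowerSpan (.single h₁))) (single_mem_lowerSpan (.single h₂))
  · have h : DegLex letterLt (normalWord 3 (a + 1)) (0 :: normalWord 3 a) :=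
      .inr ⟨by simp [normalWord], .rel letterLt_one_zero⟩
    rw [mat_zero_mulVec_single_three, ← pow_succ']
    exact single_mem_lowerSpan (.single h)
  · rw [mat_one_mulVec_single_zero]
    exact single_mem_lowerSpan .refl
  · rw [mat_one_mulVec_single_one]
    exact zero_mem _
  · rw [mat_one_mulVec_single_two]
    exact single_mem_lowerSpan .refl
  · rw [mat_one_mulVec_single_three]
    exact zero_mem _

def wordVec (l : List (Fin 2)) : Fin 4 → ℚ[X] := (l.map mat).prod *ᵥ Pi.single 0 1

theorem wordVec_cons (i : Fin 2) (l : List (Fin 2)) : wordVec (i :: l) = mat i *ᵥ wordVec l := by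
  rw [wordVec, wordVec, map_cons, prod_cons, mulVec_mulVec]

theorem mat_mulVec_mem_lowerSpan_cons (i : Fin 2) {m : List (Fin 2)} {v : Fin 4 → ℚ[X]}
    (hv : v ∈ lowerSpan m) : mat i *ᵥ v ∈ lowerSpan (i :: m) := by
  induction hv using Submodule.span_induction with
  | mem v hv =>
    obtain ⟨j, a, hja, rfl⟩ := hv
    exact lowerSpan_mono (reflGen_degLex_cons i hja) (mat_mulVec_single_mem_lowerSpan i j a)
  | zero => simp
  | add _ _ _ _ hu hv => rw [mulVec_add]; exact add_mem hu hv
  | smul c _ _ hv => rw [mulVec_smul]; exact Submodule.smul_mem _ c hv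

theorem wordVec_mem_lowerSpan (l : List (Fin 2)) : wordVec l ∈ lowerSpan l := by
  induction l with
  | nil =>
    rw [wordVec, map_nil, prod_nil, one_mulVec, ← pow_zero X]
    exact single_mem_lowerSpan (m := []) (j := 0) .refl
  | cons i l ih => rw [wordVec_cons]; exact mat_mulVec_mem_lowerSpan_cons i ih

theorem wordVec_replicate (a : ℕ) :
    wordVec (replicate a 0) = (Pi.single 0 (X ^ a) : Fin 4 → ℚ[X]) := by
  induction a with
  | zero => rw [replicate_zero, wordVec, map_nil, prod_nil, one_mulVec, pow_zero]
  | succ a ih =>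
    rw [replicate_succ, wordVec_cons, ih, mat_zero_mulVec_single_zero, pow_succ']

theorem wordVec_normalWord (j : Fin 4) (a : ℕ) : wordVec (normalWord j a) = Pi.single j (X ^ a) := by
  fin_cases j <;> simp only [normalWord, wordVec_cons, wordVec_replicate,
    mat_one_mulVec_single_zero, mat_zero_mulVec_single_one, mat_one_mulVec_single_two] <;> rfl

theorem coeff_wordVec_eq_zero {l : List (Fin 2)} {j : Fin 4} {a : ℕ}
    (h : DegLex letterLt l (normalWord j a)) : (wordVec l j).coeff a = 0 := by
  let f : (Fin 4 → ℚ[X]) →ₗ[ℚ] ℚ := lcoeff ℚ a ∘ₗ LinearMap.proj j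
  suffices lowerSpan l ≤ LinearMap.ker f from this (wordVec_mem_lowerSpan l)
  refine Submodule.span_le.mpr ?_
  rintro _ ⟨j', a', hle, rfl⟩
  have hne : ¬ (j' = j ∧ a' = a) := by
    rintro ⟨rfl, rfl⟩
    cases hle with
    | refl => exact DegLex.irrefl _ h
    | single hlt => exact DegLex.irrefl _ (hlt.trans h)
  simp only [SetLike.mem_coe, LinearMap.mem_ker, f, LinearMap.comp_apply, LinearMap.proj_apply,
    lcoeff_apply]
  rcases eq_or_ne j' j with rfl | hj
  · rw [Pi.single_eq_same, coeff_X_pow, if_neg fun h => hne ⟨rfl, h.symm⟩]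
  · rw [Pi.single_eq_of_ne hj.symm, coeff_zero]

theorem apply_eq_coeff_mul_of_isLeadingMonomial (f : FA2 →ₗ[ℚ] ℚ) {p : FA2}
    {m : FreeMonoid (Fin 2)} (hm : IsLeadingMonomial p m)
    (hlt : ∀ m', degLexLt m' m → f (.single m' 1) = 0) :
    f p = p.coeff m * f (.single m 1) := by
  have hsingle : ∀ m' c, f (.single m' c) = c * f (.single m' 1) := fun m' c => by
    rw [← smul_eq_mul, ← map_smul, MonoidAlgebra.smul_single', mul_one]
  conv_lhs => rw [← MonoidAlgebra.sum_coeff_single p]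
  rw [map_finsuppSum, Finsupp.sum, Finset.sum_eq_single m]
  · exact hsingle m _
  · intro m' hm' hne
    rw [hsingle, hlt m' (hm.2 m' hm' hne), mul_zero]
  · exact fun hm' => absurd hm.1 hm'

def coeffFunctional (j : Fin 4) (a : ℕ) : FA2 →ₗ[ℚ] ℚ :=
  lcoeff ℚ a ∘ₗ entryLinearMap ℚ ℚ[X] j 0 ∘ₗ rep.toLinearMap

theorem coeffFunctional_single (j : Fin 4) (a : ℕ) (m : FreeMonoid (Fin 2)) :
    coeffFunctional j a (.single m 1) = (wordVec m.toList j).coeff a := by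
  simp [coeffFunctional, rep_single, wordVec]

theorem not_isLeadingMonomial_normalWord {p : FA2} (hp : rep p = 0) (j : Fin 4) (a : ℕ) :
    ¬ IsLeadingMonomial p (FreeMonoid.ofList (normalWord j a)) := by
  intro hm
  have hlt : ∀ m', degLexLt m' (FreeMonoid.ofList (normalWord j a)) →
      coeffFunctional j a (.single m' 1) = 0 := fun m' h => by
    rw [coeffFunctional_single]; exact coeff_wordVec_eq_zero h
  have hself : coeffFunctional j a (.single (FreeMonoid.ofList (normalWord j a)) 1) = 1 := by
    rw [coeffFunctional_single, FreeMonoid.toList_ofList, wordVec_normalWord, Pi.single_eq_same,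
      coeff_X_pow_self]
  have hzero : coeffFunctional j a p = 0 := by simp [coeffFunctional, hp]
  rw [apply_eq_coeff_mul_of_isLeadingMonomial _ hm hlt, hself, mul_one] at hzero
  exact Finsupp.mem_support_iff.mp hm.1 hzero

end BVIdeal

/-- `{y², x²y+xyx+yx², xyxy−yxyx}` is a Gröbner basis of the ideal `(y², x²y+xyx+yx²)`
for the deg-lex order with `x > y`: the three elements lie in the ideal, and the leading
monomial of every nonzero element of the ideal has one of the leading words
`yy`, `xxy`, `xyxy` as a factor. -/
theorem bv_groebner_basis :
    G1 ∈ BVIdeal ∧ G2 ∈ BVIdeal ∧ G3 ∈ BVIdeal ∧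
    ∀ p ∈ BVIdeal, p ≠ 0 → ∀ m, IsLeadingMonomial p m →
      ∃ u v : FreeMonoid (Fin 2),
        m = u * w [1, 1] * v ∨ m = u * w [0, 0, 1] * v ∨ m = u * w [0, 1, 0, 1] * v := by
  refine ⟨BVIdeal.G1_mem, BVIdeal.G2_mem, BVIdeal.G3_mem, fun p hp _ m hm => ?_⟩
  rcases BVIdeal.normalWord_or_infix m.toList with ⟨j, a, hm'⟩ | h | h | h
  · rw [← FreeMonoid.ofList_toList m, hm'] at hm
    exact absurd hm (BVIdeal.not_isLeadingMonomial_normalWord (BVIdeal.rep_eq_zero_of_mem hp) j a)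
  · obtain ⟨u, v, huv⟩ := FreeMonoid.exists_eq_mul_ofList_mul h
    exact ⟨u, v, .inl huv⟩
  · obtain ⟨u, v, huv⟩ := FreeMonoid.exists_eq_mul_ofList_mul h
    exact ⟨u, v, .inr (.inl huv)⟩
  · obtain ⟨u, v, huv⟩ := FreeMonoid.exists_eq_mul_ofList_mul h
    exact ⟨u, v, .inr (.inr huv)⟩

end
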